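/- arXiv:1109.4926 — 2 statements merged into one kernel-verified Lean document; each statement's English description precedes it below -/
import Mathlib

section
/- If n, n₁, n₂ are integers with n = n₁ + n₂, and σ₀ = i(τ - n³) + n², σ₁ = i(τ₁ - n₁³) + n₁², σ₂ = i(τ₂ - n₂³) + n₂² with τ = τ₁ + τ₂, then max(|σ₀|, |σ₁|, |σ₂|) ≥ |n·n₁·n₂|. -/
open Complex

/-! The identity `(τ - n³) - (τ₁ - n₁³) - (τ₂ - n₂³) = -3 n n₁ n₂` forces one of the three real
numbers `τⱼ - nⱼ³` to have absolute value at least `|n n₁ n₂|`, and each of them is the imaginary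
part of the corresponding `σⱼ`. -/

theorem abs_le_norm_I_mul_add_ofReal (t m : ℝ) : |t| ≤ ‖I * t + m‖ := by
  simpa using abs_im_le_norm (I * t + m)

theorem abs_sub_sub_le_three_mul_max (a b c : ℝ) :
    |a - b - c| ≤ 3 * max |a| (max |b| |c|) := by
  calc |a - b - c| ≤ |a - b| + |c| := abs_sub _ _
    _ ≤ |a| + |b| + |c| := by gcongr; exact abs_sub _ _
    _ ≤ 3 * max |a| (max |b| |c|) := by
      linarith [le_max_left |a| (max |b| |c|), le_max_right |a| (max |b| |c|),
        le_max_left |b| |c|, le_max_right |b| |c|]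

/-- If `n = n₁ + n₂` and `τ = τ₁ + τ₂`, with `σⱼ = i(τⱼ - nⱼ³) + nⱼ²`, then
`max(|σ₀|, |σ₁|, |σ₂|) ≥ |n·n₁·n₂|`. -/
theorem stmt_0 (n n₁ n₂ : ℤ) (τ τ₁ τ₂ : ℝ)
    (hn : n = n₁ + n₂) (hτ : τ = τ₁ + τ₂) :
    ((|n * n₁ * n₂| : ℤ) : ℝ) ≤
      max (‖Complex.I * ((τ : ℂ) - (n : ℂ) ^ 3) + (n : ℂ) ^ 2‖)
        (max (‖Complex.I * ((τ₁ : ℂ) - (n₁ : ℂ) ^ 3) + (n₁ : ℂ) ^ 2‖)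
          (‖Complex.I * ((τ₂ : ℂ) - (n₂ : ℂ) ^ 3) + (n₂ : ℂ) ^ 2‖)) := by
  have hσ (t : ℝ) (m : ℤ) : |t - (m : ℝ) ^ 3| ≤ ‖I * ((t : ℂ) - (m : ℂ) ^ 3) + (m : ℂ) ^ 2‖ := by
    have h := abs_le_norm_I_mul_add_ofReal (t - (m : ℝ) ^ 3) ((m : ℝ) ^ 2)
    push_cast at h
    exact h
  have hcube : (τ - (n : ℝ) ^ 3) - (τ₁ - (n₁ : ℝ) ^ 3) - (τ₂ - (n₂ : ℝ) ^ 3)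
      = -3 * ((n : ℝ) * n₁ * n₂) := by
    subst hn hτ; push_cast; ring
  have hmax :=
    abs_sub_sub_le_three_mul_max (τ - (n : ℝ) ^ 3) (τ₁ - (n₁ : ℝ) ^ 3) (τ₂ - (n₂ : ℝ) ^ 3)
  rw [hcube, abs_mul, abs_neg, abs_of_pos three_pos] at hmax
  push_cast
  calc |(n : ℝ) * n₁ * n₂|
      ≤ max |τ - (n : ℝ) ^ 3| (max |τ₁ - (n₁ : ℝ) ^ 3| |τ₂ - (n₂ : ℝ) ^ 3|) := by linarith
    _ ≤ _ := max_le_max (hσ τ n) (max_le_max (hσ τ₁ n₁) (hσ τ₂ n₂))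
end

section
/- For integers n = n₁ + n₂ (all nonzero) and real s ≥ -1/2 - ε with 0 < ε, the quantity |n|·⟨n⟩^s / (⟨n₁⟩^s · ⟨n₂⟩^s · ⟨n·n₁·n₂⟩^{1/2-ε}) is bounded by a constant times (max(|n|,|n₁|,|n₂|))^{4ε}, where ⟨x⟩ = (1+|x|²)^{1/2}. -/
/-!
Take logarithms. For `|x| ≥ 1` the bracket `⟨x⟩` is comparable to `|x|` up to a factor `√2`, and
`⟨n₁ + n₂⟩ ≤ 2⟨n₁⟩⟨n₂⟩`, so the logarithm of the left-hand side is bounded, up to constants, by the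
linear expression `(s + 1/2 + ε) log⟨n⟩ - (s + 1/2 - ε)(log⟨n₁⟩ + log⟨n₂⟩)`. If `σ = s + 1/2 - ε ≥ 0`
this is `2ε log⟨n⟩ + σ (log⟨n⟩ - log⟨n₁⟩ - log⟨n₂⟩) ≤ 2ε log⟨n⟩ + σ log 2`. If `σ < 0`, all
coefficients are nonnegative and add up to `-s - 1/2 + 3ε ≤ 4ε`, so each logarithm may be replaced
by `log max(|n|, |n₁|, |n₂|)`.
-/

/-- The Japanese bracket `⟨x⟩ = (1 + x²)^{1/2}`. -/
noncomputable def jb (x : ℝ) : ℝ := Real.sqrt (1 + x ^ 2)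

open Real

lemma jb_pos (x : ℝ) : 0 < jb x := sqrt_pos.mpr (by positivity)

lemma abs_le_jb (x : ℝ) : |x| ≤ jb x := by
  rw [jb, ← sqrt_sq_eq_abs]
  exact sqrt_le_sqrt (by linarith)

lemma jb_le_sqrt_two_mul_abs {x : ℝ} (hx : 1 ≤ |x|) : jb x ≤ √2 * |x| := by
  rw [jb, ← sqrt_sq_eq_abs, ← sqrt_mul zero_le_two]
  exact sqrt_le_sqrt (by nlinarith [sq_abs x])

lemma jb_add_le (x y : ℝ) : jb (x + y) ≤ 2 * jb x * jb y := by
  have hsq : (2 * jb x * jb y) ^ 2 = 4 * (1 + x ^ 2) * (1 + y ^ 2) := by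
    rw [mul_pow, mul_pow, jb, jb, sq_sqrt (by positivity), sq_sqrt (by positivity)]
    ring
  rw [← abs_of_pos (by have := jb_pos x; have := jb_pos y; positivity : 0 < 2 * jb x * jb y),
    ← sqrt_sq_eq_abs, hsq, jb]
  exact sqrt_le_sqrt (by nlinarith [sq_nonneg (x - y), sq_nonneg (x * y)])

lemma log_jb_le {x : ℝ} (hx : 1 ≤ |x|) : log (jb x) ≤ log |x| + log 2 / 2 := by
  have hx0 : 0 < |x| := by linarith
  calc log (jb x) ≤ log (√2 * |x|) := log_le_log (jb_pos x) (jb_le_sqrt_two_mul_abs hx)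
    _ = log |x| + log 2 / 2 := by
      rw [log_mul (by positivity) hx0.ne', log_sqrt zero_le_two]
      ring

lemma log_jb_le_of_abs_le {x M : ℝ} (hx : 1 ≤ |x|) (hxM : |x| ≤ M) :
    log (jb x) ≤ log M + log 2 / 2 := by
  have := log_le_log (by linarith) hxM
  linarith [log_jb_le hx]

/-- The whole estimate in logarithmic variables: `l = log |n|`, `u, v, w` the logarithms of
`⟨n⟩, ⟨n₁⟩, ⟨n₂⟩`, `z` that of `⟨n n₁ n₂⟩`, `m` that of the maximum and `L = log 2`. -/
lemma log_estimate {s ε l u v w z m L : ℝ} (hε : 0 < ε) (hε₂ : ε ≤ 1 / 2)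
    (hs : -(1 / 2) - ε ≤ s) (hL : 0 ≤ L) (hm : 0 ≤ m) (hlu : l ≤ u) (htri : u ≤ v + w + L)
    (hz : u + v + w ≤ z + 3 / 2 * L) (hum : u ≤ m + L / 2) (hvm : v ≤ m + L / 2)
    (hwm : w ≤ m + L / 2) :
    l + s * u - s * v - s * w - (1 / 2 - ε) * z ≤ (|s| + 2) * L + 4 * ε * m := by
  have hz' : (1 / 2 - ε) * (u + v + w - 3 / 2 * L) ≤ (1 / 2 - ε) * z :=
    mul_le_mul_of_nonneg_left (by linarith) (by linarith)
  rcases le_or_gt 0 (s + 1 / 2 - ε) with hσ | hσ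
  · have h₁ := mul_le_mul_of_nonneg_left (by linarith : u - v - w ≤ L) hσ
    have h₂ := mul_le_mul_of_nonneg_left hum hε.le
    have hεm : 0 ≤ ε * m := mul_nonneg hε.le hm
    have hsL : 0 ≤ (|s| - s) * L := mul_nonneg (sub_nonneg.2 (le_abs_self s)) hL
    have hεL : 0 ≤ ε * L := mul_nonneg hε.le hL
    linarith
  · have h₁ := mul_le_mul_of_nonneg_left hum (by linarith : 0 ≤ s + 1 / 2 + ε)
    have h₂ := mul_le_mul_of_nonneg_left hvm (by linarith : 0 ≤ -(s + 1 / 2 - ε))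
    have h₃ := mul_le_mul_of_nonneg_left hwm (by linarith : 0 ≤ -(s + 1 / 2 - ε))
    have h₄ : 0 ≤ (s + 1 / 2 + ε) * (m + L / 2) := mul_nonneg (by linarith) (by linarith)
    have h₅ : 0 ≤ (1 / 2 - ε) * L := mul_nonneg (by linarith) hL
    have h₆ : 0 ≤ |s| * L := mul_nonneg (abs_nonneg s) hL
    linarith

theorem abs_mul_jb_rpow_div_le {s ε : ℝ} (hε : 0 < ε) (hε₂ : ε ≤ 1 / 2) (hs : -(1 / 2) - ε ≤ s)
    {n n₁ n₂ : ℝ} (hn : 1 ≤ |n|) (hn₁ : 1 ≤ |n₁|) (hn₂ : 1 ≤ |n₂|) (hsum : n = n₁ + n₂) :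
    |n| * jb n ^ s / (jb n₁ ^ s * jb n₂ ^ s * jb (n * n₁ * n₂) ^ (1 / 2 - ε)) ≤
      2 ^ (|s| + 2) * (max |n| (max |n₁| |n₂|)) ^ (4 * ε) := by
  set M := max |n| (max |n₁| |n₂|)
  have hM : 1 ≤ M := hn.trans (le_max_left _ _)
  have hn0 : 0 < |n| := by linarith
  have hlog_abs : log |n * n₁ * n₂| = log |n| + log |n₁| + log |n₂| := by
    rw [abs_mul, abs_mul, log_mul (by positivity) (by positivity),
      log_mul (by positivity) (by positivity)]
  have hlu : log |n| ≤ log (jb n) := log_le_log hn0 (abs_le_jb n)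
  have htri : log (jb n) ≤ log (jb n₁) + log (jb n₂) + log 2 := by
    have := log_le_log (jb_pos n) (hsum ▸ jb_add_le n₁ n₂)
    rw [log_mul (by have := jb_pos n₁; positivity) (jb_pos n₂).ne', log_mul two_ne_zero
      (jb_pos n₁).ne'] at this
    linarith
  have hz : log (jb n) + log (jb n₁) + log (jb n₂) ≤ log (jb (n * n₁ * n₂)) + 3 / 2 * log 2 := by
    have := log_le_log (by rw [abs_mul, abs_mul]; positivity) (abs_le_jb (n * n₁ * n₂))
    linarith [log_jb_le hn, log_jb_le hn₁, log_jb_le hn₂]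
  have key := log_estimate hε hε₂ hs (log_nonneg one_le_two) (log_nonneg hM) hlu htri hz
    (log_jb_le_of_abs_le hn (le_max_left _ _))
    (log_jb_le_of_abs_le hn₁ ((le_max_left _ _).trans (le_max_right _ _)))
    (log_jb_le_of_abs_le hn₂ ((le_max_right _ _).trans (le_max_right _ _)))
  calc |n| * jb n ^ s / (jb n₁ ^ s * jb n₂ ^ s * jb (n * n₁ * n₂) ^ (1 / 2 - ε))
      = exp (log |n| + s * log (jb n) - s * log (jb n₁) - s * log (jb n₂)
          - (1 / 2 - ε) * log (jb (n * n₁ * n₂))) := by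
        simp only [exp_sub, exp_add, exp_log hn0,
          rpow_def_of_pos (jb_pos _), mul_comm _ (log _)]
        field_simp
    _ ≤ exp ((|s| + 2) * log 2 + 4 * ε * log M) := exp_le_exp.mpr key
    _ = 2 ^ (|s| + 2) * M ^ (4 * ε) := by
        rw [exp_add, rpow_def_of_pos two_pos, rpow_def_of_pos (by positivity : 0 < M)]
        ring_nf

/-- For nonzero integers `n = n₁ + n₂` and `s ≥ -1/2 - ε`, `0 < ε < 1/16`,
`|n|·⟨n⟩^s / (⟨n₁⟩^s ⟨n₂⟩^s ⟨n n₁ n₂⟩^{1/2-ε}) ≲ (max(|n|,|n₁|,|n₂|))^{4ε}`. -/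
theorem stmt_1 (s ε : ℝ) (hε : 0 < ε) (hε' : ε < 1 / 16) (hs : -(1 / 2) - ε ≤ s) :
    ∃ C > 0, ∀ n n₁ n₂ : ℤ, n ≠ 0 → n₁ ≠ 0 → n₂ ≠ 0 → n = n₁ + n₂ →
      |(n : ℝ)| * jb n ^ s /
          (jb n₁ ^ s * jb n₂ ^ s * jb ((n : ℝ) * n₁ * n₂) ^ (1 / 2 - ε)) ≤
        C * (max |(n : ℝ)| (max |(n₁ : ℝ)| |(n₂ : ℝ)|)) ^ (4 * ε) := by
  refine ⟨2 ^ (|s| + 2), by positivity, fun n n₁ n₂ hn hn₁ hn₂ hsum => ?_⟩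
  have one_le_abs_cast {k : ℤ} (hk : k ≠ 0) : (1 : ℝ) ≤ |(k : ℝ)| := by
    exact_mod_cast Int.one_le_abs hk
  exact abs_mul_jb_rpow_div_le hε (by linarith) hs (one_le_abs_cast hn) (one_le_abs_cast hn₁)
    (one_le_abs_cast hn₂) (by exact_mod_cast hsum)
end
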